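/- Let M be a reductive monoid, i.e., for every f, g ∈ M there exists h ∈ M with f = hg or g = hf. Let L be a first-order language with unary relation symbols, a unary function symbol for each element of M, and a constant symbol w, and let B be a theory in L containing the laws: f(w) ≈ w for every f ∈ M; i(x) ≈ x for the identity i of M, and f(g(x)) ≈ h(x) whenever h = gf in M; and ∀x∀y (f(x) ≈ f(y) → x ≈ y) for every f ∈ M. Then for all f, g ∈ M there exists h ∈ M such that the atomic formula f(x) ≈ g(y) is equivalent modulo B either to x ≈ h(y) or to h(x) ≈ y (i.e., B entails the universal closure of the corresponding biconditional). -/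

import Mathlib

open FirstOrder FirstOrder.Language

universe u

/-- A monoid is reductive if for every pair `f, g` there is `h` such that
either `f = hg` or `g = hf`. -/
def IsReductive (M : Type u) [Monoid M] : Prop :=
  ∀ f g : M, ∃ h : M, f = h * g ∨ g = h * f

/-- The language with unary relation symbols indexed by `R`, a unary function
symbol for each element of `M`, and one constant symbol `w`. -/
def LangM (R : Type u) (M : Type u) : FirstOrder.Language.{u, u} where
  Functions := fun n => match n with
    | 0 => PUnit
    | 1 => M
    | _ + 2 => PEmpty
  Relations := fun n => match n with
    | 1 => R
    | _ => PEmpty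

/-- The constant term `w`. -/
def wTerm (R M : Type u) {α : Type*} : (LangM R M).Term α :=
  Constants.term (PUnit.unit : (LangM R M).Constants)

/-- Application of the unary function symbol corresponding to `f ∈ M`. -/
def fnApp {R M : Type u} {α : Type*} (f : M) (t : (LangM R M).Term α) :
    (LangM R M).Term α :=
  Functions.apply₁ (show (LangM R M).Functions 1 from f) t

/-- The variable `x` in a context of one bound variable. -/
def x1 (R M : Type u) : (LangM R M).Term (Empty ⊕ Fin 1) := &0

/-- The variable `x` in a context of two bound variables. -/
def x2 (R M : Type u) : (LangM R M).Term (Empty ⊕ Fin 2) := &0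

/-- The variable `y` in a context of two bound variables. -/
def y2 (R M : Type u) : (LangM R M).Term (Empty ⊕ Fin 2) := &1

/-! If `f = h * g`, the law `g(h(x)) ≈ f(x)` rewrites `f(x) ≈ g(y)` as `g(h(x)) ≈ g(y)`, and
injectivity of `g` reduces this to `h(x) ≈ y`; the case `g = h * f` is symmetric. -/

theorem eq_iff_eq_of_comp_eq {M N : Type*} {F : M → N → N} {f g h : M}
    (hcomp : ∀ a, F g (F h a) = F f a) (hinj : Function.Injective (F g)) (a b : N) :
    F f a = F g b ↔ F h a = b := by
  rw [← hcomp, hinj.eq_iff]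

section Semantics

variable {R M : Type u} {N : Type*} [(LangM R M).Structure N]

variable (R) in
def interp (f : M) (a : N) : N :=
  Structure.funMap (show (LangM R M).Functions 1 from f) ![a]

@[simp]
theorem realize_fnApp {α : Type*} (v : α → N) (f : M) (t : (LangM R M).Term α) :
    (fnApp f t).realize v = interp R f (t.realize v) :=
  Term.realize_functions_apply₁

theorem realize_comp_law (f g h : M) :
    N ⊨ ((fnApp f (fnApp g (x1 R M))).bdEqual (fnApp h (x1 R M))).all ↔
      ∀ a : N, interp R f (interp R g a) = interp R h a := by
  simp [x1, Sentence.Realize, Formula.Realize, Fin.snoc]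

theorem realize_injectivity_law (f : M) :
    N ⊨ (((fnApp f (x2 R M)).bdEqual (fnApp f (y2 R M))).imp
        ((x2 R M).bdEqual (y2 R M))).all.all ↔ Function.Injective (interp R f (N := N)) := by
  simp [x2, y2, Sentence.Realize, Formula.Realize, Fin.snoc, Function.Injective]

theorem realize_all_all_bdEqual_iff_bdEqual (s t s' t' : (LangM R M).Term (Empty ⊕ Fin 2)) :
    N ⊨ ((s.bdEqual t).iff (s'.bdEqual t')).all.all ↔ ∀ a b : N,
      let v : Empty ⊕ Fin 2 → N := Sum.elim default ![a, b]
      (s.realize v = t.realize v ↔ s'.realize v = t'.realize v) := by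
  have snoc_snoc : ∀ a b : N, (Fin.snoc (Fin.snoc default a) b : Fin 2 → N) = ![a, b] :=
    fun a b => by ext i; fin_cases i <;> rfl
  simp [Sentence.Realize, Formula.Realize, snoc_snoc]

end Semantics

theorem atomic_reduction_general (R M : Type u) [Monoid M] (hred : IsReductive M)
    (B : (LangM R M).Theory)
    (hBcomp : ∀ f g h : M, h = g * f →
      ((fnApp f (fnApp g (x1 R M))).bdEqual (fnApp h (x1 R M))).all ∈ B)
    (hBinj : ∀ f : M,
      (((fnApp f (x2 R M)).bdEqual (fnApp f (y2 R M))).imp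
        ((x2 R M).bdEqual (y2 R M))).all.all ∈ B) :
    ∀ f g : M, ∃ h : M,
      (B ⊨ᵇ (((fnApp f (x2 R M)).bdEqual (fnApp g (y2 R M))).iff
        ((x2 R M).bdEqual (fnApp h (y2 R M)))).all.all) ∨
      (B ⊨ᵇ (((fnApp f (x2 R M)).bdEqual (fnApp g (y2 R M))).iff
        ((fnApp h (x2 R M)).bdEqual (y2 R M))).all.all) := by
  intro f g
  obtain ⟨h, hfhg | hghf⟩ := hred f g
  · refine ⟨h, Or.inr (Theory.models_sentence_iff.2 fun N => ?_)⟩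
    have hcomp := (realize_comp_law (N := N) g h f).1
      (Theory.realize_sentence_of_mem B (hBcomp g h f hfhg))
    have hinj := (realize_injectivity_law (N := N) g).1
      (Theory.realize_sentence_of_mem B (hBinj g))
    simpa [realize_all_all_bdEqual_iff_bdEqual, x2, y2] using eq_iff_eq_of_comp_eq hcomp hinj
  · refine ⟨h, Or.inl (Theory.models_sentence_iff.2 fun N => ?_)⟩
    have hcomp := (realize_comp_law (N := N) f h g).1
      (Theory.realize_sentence_of_mem B (hBcomp f h g hghf))
    have hinj := (realize_injectivity_law (N := N) f).1
      (Theory.realize_sentence_of_mem B (hBinj f))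
    simpa [realize_all_all_bdEqual_iff_bdEqual, x2, y2] using fun a b =>
      eq_comm.trans ((eq_iff_eq_of_comp_eq hcomp hinj b a).trans eq_comm)

/-- Let `M` be a reductive monoid and let `B` be a theory in the
language `L` (unary relation symbols, unary function symbols indexed by `M`,
constant `w`) containing the laws `f(w) ≈ w` for every `f ∈ M`; `i(x) ≈ x` for the
identity `i` of `M` and `f(g(x)) ≈ h(x)` whenever `h = gf` in `M`; and
`∀x∀y (f(x) ≈ f(y) → x ≈ y)` for every `f ∈ M`.  Then for all `f, g ∈ M` there
exists `h ∈ M` such that the atomic formula `f(x) ≈ g(y)` is equivalent modulo `B`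
either to `x ≈ h(y)` or to `h(x) ≈ y` (i.e. `B` entails the universal closure of
the corresponding biconditional). -/
theorem atomic_reduction (R M : Type u) [Monoid M] (hred : IsReductive M)
    (B : (LangM R M).Theory)
    (hBw : ∀ f : M,
      ((fnApp f (wTerm R M)).bdEqual (wTerm R M) : (LangM R M).Sentence) ∈ B)
    (hBid : ((fnApp (1 : M) (x1 R M)).bdEqual (x1 R M)).all ∈ B)
    (hBcomp : ∀ f g h : M, h = g * f →
      ((fnApp f (fnApp g (x1 R M))).bdEqual (fnApp h (x1 R M))).all ∈ B)
    (hBinj : ∀ f : M,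
      (((fnApp f (x2 R M)).bdEqual (fnApp f (y2 R M))).imp
        ((x2 R M).bdEqual (y2 R M))).all.all ∈ B) :
    ∀ f g : M, ∃ h : M,
      (B ⊨ᵇ (((fnApp f (x2 R M)).bdEqual (fnApp g (y2 R M))).iff
        ((x2 R M).bdEqual (fnApp h (y2 R M)))).all.all) ∨
      (B ⊨ᵇ (((fnApp f (x2 R M)).bdEqual (fnApp g (y2 R M))).iff
        ((fnApp h (x2 R M)).bdEqual (y2 R M))).all.all) :=
  atomic_reduction_general R M hred B hBcomp hBinj
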